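/- Simply transitive action of SL(2,ℝ) on the open orbit in the flag space (Lemma 4.2(1)): Let j : SL(2,ℝ) → GL(3,ℝ) be the embedding sending A to the block-diagonal matrix with blocks A and 1. Let Y = {([v],[f]) ∈ X : v ∉ span(e₁,e₂) and f(e₃) ≠ 0} ⊆ X, and let o' = ([(1,0,1)], [f₀]) ∈ X, where f₀ is the linear form f₀(x,y,z) = x − z. Then the map A ↦ j(A)·o' is a bijection from SL(2,ℝ) onto Y; in particular, Y is invariant under j(SL(2,ℝ)) and j(SL(2,ℝ)) acts simply transitively on Y. -/

import Mathlib

open Matrix Filter Topology Set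

noncomputable section

/-- `V3` is `ℝ³`. -/
abbrev V3 : Type := Fin 3 → ℝ

/-- The group `GL(3,ℝ)` of invertible `3 × 3` real matrices. -/
abbrev GL3 : Type := (Matrix (Fin 3) (Fin 3) ℝ)ˣ

/-- Nonzero vectors of `ℝ³` up to a nonzero scalar. -/
def projSetoid : Setoid {v : V3 // v ≠ 0} where
  r v w := ∃ c : ℝ, c ≠ 0 ∧ w.1 = c • v.1
  iseqv := by
    refine ⟨fun v => ⟨1, one_ne_zero, (one_smul ℝ v.1).symm⟩, ?_, ?_⟩
    · rintro v w ⟨c, hc, h⟩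
      exact ⟨c⁻¹, inv_ne_zero hc, by rw [h, smul_smul, inv_mul_cancel₀ hc, one_smul]⟩
    · rintro u v w ⟨c, hc, h⟩ ⟨d, hd, h'⟩
      exact ⟨d * c, mul_ne_zero hd hc, by rw [h', h, smul_smul]⟩

/-- The real projective plane `ℝP²`, as the quotient of `ℝ³ \ {0}` by nonzero scalings,
with the quotient topology.  (We use the same model for the dual projective plane `ℝP²*`,
a class `[f₁ : f₂ : f₃]*` of linear forms being recorded through its coefficient
vector `(f₁, f₂, f₃)`; the form acts on vectors by the dot product.) -/
def RP2 : Type := Quotient projSetoid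

/-- The projective class `[v]` of a nonzero vector. -/
def RP2.mk (v : V3) (hv : v ≠ 0) : RP2 := Quotient.mk projSetoid ⟨v, hv⟩

instance : TopologicalSpace RP2 :=
  inferInstanceAs (TopologicalSpace (Quotient projSetoid))

lemma RP2.ind {P : RP2 → Prop} (h : ∀ (v : V3) (hv : v ≠ 0), P (RP2.mk v hv)) (p : RP2) : P p := by
  refine Quotient.ind (fun a => ?_) p
  exact h a.1 a.2

lemma RP2.mk_eq_mk_iff {v w : V3} {hv : v ≠ 0} {hw : w ≠ 0} :
    RP2.mk v hv = RP2.mk w hw ↔ ∃ c : ℝ, c ≠ 0 ∧ w = c • v :=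
  ⟨fun h => Quotient.exact h, fun h => Quotient.sound h⟩

lemma ne_zero_of_coord {v : V3} (i : Fin 3) (h : v i ≠ 0) : v ≠ 0 :=
  fun h0 => h (by rw [h0]; rfl)

/-- The projective class of a vector, defaulting to `[e₁]` for the zero vector. -/
def RP2.mk' (v : V3) : RP2 :=
  if h : v = 0 then RP2.mk ![1, 0, 0] (ne_zero_of_coord 0 (by simp)) else RP2.mk v h

lemma e1_ne : (![1, 0, 0] : V3) ≠ 0 := ne_zero_of_coord 0 (by norm_num)

lemma e3_ne : (![0, 0, 1] : V3) ≠ 0 := ne_zero_of_coord 2 (by simp)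

lemma GL3.mulVec_ne {g : GL3} {v : V3} (hv : v ≠ 0) :
    (g : Matrix (Fin 3) (Fin 3) ℝ) *ᵥ v ≠ 0 := by
  intro h
  apply hv
  have h2 : ((g⁻¹ : GL3) : Matrix (Fin 3) (Fin 3) ℝ) *ᵥ
      ((g : Matrix (Fin 3) (Fin 3) ℝ) *ᵥ v) = 0 := by rw [h, Matrix.mulVec_zero]
  rwa [Matrix.mulVec_mulVec, Units.inv_mul, Matrix.one_mulVec] at h2

/-- The action of `g ∈ GL(3,ℝ)` on `ℝP²`, `g · [v] = [g v]`. -/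
def RP2.mapMat (g : GL3) : RP2 → RP2 :=
  Quotient.lift
    (fun a : {v : V3 // v ≠ 0} =>
      RP2.mk ((g : Matrix (Fin 3) (Fin 3) ℝ) *ᵥ a.1) (GL3.mulVec_ne a.2))
    (by
      rintro a b ⟨c, hc, h⟩
      apply Quotient.sound
      refine ⟨c, hc, ?_⟩
      show (g : Matrix (Fin 3) (Fin 3) ℝ) *ᵥ b.1 = c • ((g : Matrix (Fin 3) (Fin 3) ℝ) *ᵥ a.1)
      rw [h, Matrix.mulVec_smul])

lemma RP2.mapMat_mk (g : GL3) (v : V3) (hv : v ≠ 0) :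
    RP2.mapMat g (RP2.mk v hv) =
      RP2.mk ((g : Matrix (Fin 3) (Fin 3) ℝ) *ᵥ v) (GL3.mulVec_ne hv) := rfl

/-- The element of `GL(3,ℝ)` acting on coefficient vectors of linear forms the way `g`
acts on `ℝP²*`:  the coefficient vector of `f ∘ g⁻¹` is `(g⁻¹)ᵀ` applied to that of `f`. -/
def dualGL (g : GL3) : GL3 where
  val := ((g⁻¹ : GL3) : Matrix (Fin 3) (Fin 3) ℝ)ᵀ
  inv := ((g : GL3) : Matrix (Fin 3) (Fin 3) ℝ)ᵀ
  val_inv := by rw [← Matrix.transpose_mul, Units.mul_inv, Matrix.transpose_one]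
  inv_val := by rw [← Matrix.transpose_mul, Units.inv_mul, Matrix.transpose_one]

/-- The flag space `X`: pairs `([v], [f]) ∈ ℝP² × ℝP²*` with `f(v) = 0`. -/
def FlagSpace : Set (RP2 × RP2) :=
  {x | ∀ (v f : V3) (hv : v ≠ 0) (hf : f ≠ 0),
    x.1 = RP2.mk v hv → x.2 = RP2.mk f hf → f ⬝ᵥ v = 0}

/-- Points of the flag space. -/
abbrev Flag3 : Type := ↥FlagSpace

lemma mem_flagSpace_mk {v f : V3} (hv : v ≠ 0) (hf : f ≠ 0) (h : f ⬝ᵥ v = 0) :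
    (RP2.mk v hv, RP2.mk f hf) ∈ FlagSpace := by
  rintro v' f' hv' hf' hp hq
  obtain ⟨c, hc, hcv⟩ := RP2.mk_eq_mk_iff.1 hp
  obtain ⟨d, hd, hdf⟩ := RP2.mk_eq_mk_iff.1 hq
  rw [hcv, hdf, smul_dotProduct, dotProduct_smul, h]
  simp

lemma dot_invariance (g : GL3) (v f : V3) :
    (((dualGL g : GL3) : Matrix (Fin 3) (Fin 3) ℝ) *ᵥ f) ⬝ᵥ
      ((g : Matrix (Fin 3) (Fin 3) ℝ) *ᵥ v) = f ⬝ᵥ v := by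
  have h1 : ((dualGL g : GL3) : Matrix (Fin 3) (Fin 3) ℝ) *ᵥ f =
      f ᵥ* ((g⁻¹ : GL3) : Matrix (Fin 3) (Fin 3) ℝ) := Matrix.mulVec_transpose _ _
  rw [h1, Matrix.dotProduct_mulVec, Matrix.vecMul_vecMul, Units.inv_mul, Matrix.vecMul_one]

lemma flagPair_mem (g : GL3) {x : RP2 × RP2} (hx : x ∈ FlagSpace) :
    (RP2.mapMat g x.1, RP2.mapMat (dualGL g) x.2) ∈ FlagSpace := by
  obtain ⟨p, q⟩ := x
  revert hx
  refine Quotient.inductionOn₂ p q ?_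
  rintro ⟨v, hv⟩ ⟨f, hf⟩ hx
  have h0 : f ⬝ᵥ v = 0 := hx v f hv hf rfl rfl
  exact mem_flagSpace_mk _ _ (by rw [dot_invariance]; exact h0)

/-- The action of `g ∈ GL(3,ℝ)` on the flag space,
`g · ([v], [f]) = ([g v], [f ∘ g⁻¹])`. -/
def flagMap (g : GL3) (x : Flag3) : Flag3 :=
  ⟨(RP2.mapMat g x.1.1, RP2.mapMat (dualGL g) x.1.2), flagPair_mem g x.2⟩

/-! ### Composition laws and continuity -/

lemma RP2.mapMat_mapMat (g h : GL3) (p : RP2) :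
    RP2.mapMat g (RP2.mapMat h p) = RP2.mapMat (g * h) p := by
  refine Quotient.inductionOn p fun a => ?_
  apply Quotient.sound
  exact ⟨1, one_ne_zero, by simp [Matrix.mulVec_mulVec, Units.val_mul]⟩

lemma RP2.mapMat_one (p : RP2) : RP2.mapMat 1 p = p := by
  refine Quotient.inductionOn p fun a => ?_
  apply Quotient.sound
  exact ⟨1, one_ne_zero, by simp [Matrix.one_mulVec, Units.val_one]⟩

lemma dualGL_mul (g h : GL3) : dualGL (g * h) = dualGL g * dualGL h := by
  apply Units.ext
  rw [Units.val_mul]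
  show (((g * h)⁻¹ : GL3) : Matrix (Fin 3) (Fin 3) ℝ)ᵀ =
    ((g⁻¹ : GL3) : Matrix (Fin 3) (Fin 3) ℝ)ᵀ * ((h⁻¹ : GL3) : Matrix (Fin 3) (Fin 3) ℝ)ᵀ
  rw [_root_.mul_inv_rev, Units.val_mul, Matrix.transpose_mul]

lemma dualGL_one : dualGL (1 : GL3) = 1 := by
  apply Units.ext
  show (((1 : GL3)⁻¹ : GL3) : Matrix (Fin 3) (Fin 3) ℝ)ᵀ = ((1 : GL3) : Matrix (Fin 3) (Fin 3) ℝ)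
  rw [inv_one, Units.val_one, Matrix.transpose_one]

lemma flagMap_flagMap (g h : GL3) (x : Flag3) :
    flagMap g (flagMap h x) = flagMap (g * h) x := by
  apply Subtype.ext
  apply Prod.ext
  · exact RP2.mapMat_mapMat g h x.1.1
  · show RP2.mapMat (dualGL g) (RP2.mapMat (dualGL h) x.1.2) = RP2.mapMat (dualGL (g * h)) x.1.2
    rw [RP2.mapMat_mapMat, dualGL_mul]

lemma flagMap_one (x : Flag3) : flagMap 1 x = x := by
  apply Subtype.ext
  apply Prod.ext
  · exact RP2.mapMat_one x.1.1
  · show RP2.mapMat (dualGL 1) x.1.2 = x.1.2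
    rw [dualGL_one, RP2.mapMat_one]

lemma continuous_mulVec (M : Matrix (Fin 3) (Fin 3) ℝ) :
    Continuous fun v : V3 => M *ᵥ v := by
  have h : (fun v : V3 => M *ᵥ v) = fun v => fun i => ∑ j, M i j * v j := by
    funext v i
    simp [Matrix.mulVec, dotProduct]
  rw [h]
  exact continuous_pi fun i =>
    continuous_finset_sum _ fun j _ => continuous_const.mul (continuous_apply j)

lemma continuous_mapMat (g : GL3) : Continuous (RP2.mapMat g) := by
  apply Continuous.quotient_lift
  exact continuous_quotient_mk'.comp
    (Continuous.subtype_mk ((continuous_mulVec _).comp continuous_subtype_val) _)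

lemma continuous_flagMap (g : GL3) : Continuous (flagMap g) := by
  apply Continuous.subtype_mk
  exact ((continuous_mapMat g).comp (continuous_fst.comp continuous_subtype_val)).prodMk
    ((continuous_mapMat (dualGL g)).comp (continuous_snd.comp continuous_subtype_val))

/-- The action of `g ∈ GL(3,ℝ)` on the flag space, as a homeomorphism. -/
def flagHomeo (g : GL3) : Flag3 ≃ₜ Flag3 where
  toFun := flagMap g
  invFun := flagMap g⁻¹
  left_inv := fun x => by rw [flagMap_flagMap, inv_mul_cancel, flagMap_one]
  right_inv := fun x => by rw [flagMap_flagMap, mul_inv_cancel, flagMap_one]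
  continuous_toFun := continuous_flagMap g
  continuous_invFun := continuous_flagMap g⁻¹

/-- The group of homeomorphisms of a topological space
(with `(f * g) x = f (g x)`). -/
instance homeoGroup (Z : Type*) [TopologicalSpace Z] : Group (Z ≃ₜ Z) where
  mul f g := g.trans f
  one := Homeomorph.refl Z
  inv := Homeomorph.symm
  mul_assoc _ _ _ := Homeomorph.ext fun _ => rfl
  one_mul _ := Homeomorph.ext fun _ => rfl
  mul_one _ := Homeomorph.ext fun _ => rfl
  inv_mul_cancel f := Homeomorph.ext fun x => f.symm_apply_apply x

/-! ### Geometric objects in the flag space -/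

/-- The α-circle of a point `p ∈ ℝP²`: all flags whose point is `p`. -/
def Cα (p : RP2) : Set Flag3 := {x | x.1.1 = p}

/-- The β-circle of the projective line with defining form (class) `q`:
all flags whose plane is `ker q`. -/
def Cβ (q : RP2) : Set Flag3 := {x | x.1.2 = q}

/-- The plane of the flag `x` contains the direction of the vector `u`. -/
def planeContains (x : Flag3) (u : V3) : Prop :=
  ∀ (f : V3) (hf : f ≠ 0), x.1.2 = RP2.mk f hf → f ⬝ᵥ u = 0

/-- The point of the flag `x` lies on the projective line defined by the linear
form of coefficients `w`. -/
def pointOnForm (x : Flag3) (w : V3) : Prop :=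
  ∀ (v : V3) (hv : v ≠ 0), x.1.1 = RP2.mk v hv → w ⬝ᵥ v = 0

/-- The β-circle of the projective line spanned by the (independent) directions of
`u` and `w`: all flags whose plane contains both. -/
def CβSpan (u w : V3) : Set Flag3 := {x | planeContains x u ∧ planeContains x w}

lemma li_ne_zero_0 {v1 v2 v3 : V3} (h : LinearIndependent ℝ ![v1, v2, v3]) : v1 ≠ 0 := by
  have := h.ne_zero 0; simpa using this

lemma li_ne_zero_1 {v1 v2 v3 : V3} (h : LinearIndependent ℝ ![v1, v2, v3]) : v2 ≠ 0 := by
  have := h.ne_zero 1; simpa using this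

lemma li_ne_zero_2 {v1 v2 v3 : V3} (h : LinearIndependent ℝ ![v1, v2, v3]) : v3 ≠ 0 := by
  have := h.ne_zero 2; simpa using this

/-- The repulsive bouquet of circles `B⁻(g) = C_α([v₃]) ∪ C_β(span(v₂,v₃))` of a
loxodromic element with eigenvectors `v₁, v₂, v₃` (eigenvalues in decreasing order
of modulus). -/
def bouquetMinus (v2 v3 : V3) (h3 : v3 ≠ 0) : Set Flag3 :=
  Cα (RP2.mk v3 h3) ∪ CβSpan v2 v3

/-- The attractive bouquet of circles `B⁺(g) = C_α([v₁]) ∪ C_β(span(v₁,v₂))`. -/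
def bouquetPlus (v1 v2 : V3) (h1 : v1 ≠ 0) : Set Flag3 :=
  Cα (RP2.mk v1 h1) ∪ CβSpan v1 v2

/-- The dynamic set of a point `x` under a sequence of maps `g n`: all limits of
`g (n k) (x k)` for a strictly increasing sequence `(n k)` and a sequence `x k → x`. -/
def DynSet {M : Type*} [TopologicalSpace M] (g : ℕ → M → M) (x : M) : Set M :=
  {y | ∃ φ : ℕ → ℕ, StrictMono φ ∧ ∃ u : ℕ → M,
    Tendsto u atTop (𝓝 x) ∧ Tendsto (fun k => g (φ k) (u k)) atTop (𝓝 y)}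

end

/-- The embedding `j : SL(2,ℝ) → GL(3,ℝ)`, at the level of matrices. -/
def jmat (B : Matrix (Fin 2) (Fin 2) ℝ) : Matrix (Fin 3) (Fin 3) ℝ :=
  !![B 0 0, B 0 1, 0; B 1 0, B 1 1, 0; 0, 0, 1]

lemma jmat_mul (B C : Matrix (Fin 2) (Fin 2) ℝ) : jmat B * jmat C = jmat (B * C) := by
  ext i j
  fin_cases i <;> fin_cases j <;>
    simp [jmat, Matrix.mul_apply, Fin.sum_univ_three, Fin.sum_univ_two]

lemma jmat_one : jmat 1 = 1 := by
  ext i j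
  fin_cases i <;> fin_cases j <;>
    simp [jmat, Matrix.one_apply, Matrix.vecHead, Matrix.vecTail]

/-- `SL(2,ℝ)`. -/
abbrev SL2 : Type := Matrix.SpecialLinearGroup (Fin 2) ℝ

/-- The embedding `j : SL(2,ℝ) → GL(3,ℝ)`. -/
def jGL (B : SL2) : GL3 where
  val := jmat B
  inv := jmat ((B⁻¹ : SL2) : Matrix (Fin 2) (Fin 2) ℝ)
  val_inv := by
    rw [jmat_mul, ← Matrix.SpecialLinearGroup.coe_mul, mul_inv_cancel,
      Matrix.SpecialLinearGroup.coe_one, jmat_one]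
  inv_val := by
    rw [jmat_mul, ← Matrix.SpecialLinearGroup.coe_mul, inv_mul_cancel,
      Matrix.SpecialLinearGroup.coe_one, jmat_one]

/-- The base flag `o' = ([(1,0,1)], [f₀])` with `f₀(x,y,z) = x - z`. -/
def oFlag : Flag3 :=
  ⟨(RP2.mk ![1, 0, 1] (ne_zero_of_coord 0 (by norm_num)),
    RP2.mk ![1, 0, -1] (ne_zero_of_coord 0 (by norm_num))),
   mem_flagSpace_mk _ _ (by simp [dotProduct, Fin.sum_univ_three])⟩

/-- The open orbit `Y = {([v],[f]) ∈ X : v ∉ span(e₁,e₂), f(e₃) ≠ 0}`. -/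
def Yset : Set Flag3 :=
  {x | (∀ (v : V3) (hv : v ≠ 0), (x : RP2 × RP2).1 = RP2.mk v hv → v 2 ≠ 0) ∧
       (∀ (f : V3) (hf : f ≠ 0), (x : RP2 × RP2).2 = RP2.mk f hf → f 2 ≠ 0)}

/-!
`B = !![a, b; c, d] ∈ SL(2,ℝ)` sends `o'` to the flag `([a : c : 1], [d : -b : -1])`, since
`f₀ ∘ j(B)⁻¹ = d x - b y - z`. Conversely, a flag `([v], [f])` with `v₃ ≠ 0` and `f₃ ≠ 0` has unique
representatives `v = (a, c, 1)` and `f = (d, -b, -1)`, and for these the incidence `f(v) = 0` reads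
`ad - bc = 1`. So the orbit map of `o'` is a bijection from `SL(2,ℝ)` onto `Y`, and a group whose
orbit map at a point is injective acts simply transitively on that orbit.
-/

theorem MulAction.existsUnique_smul_eq_of_injective {G α : Type*} [Group G] [MulAction G α]
    {a : α} (h : Function.Injective (· • a : G → α)) {x y : α}
    (hx : x ∈ MulAction.orbit G a) (hy : y ∈ MulAction.orbit G a) : ∃! g : G, g • x = y := by
  obtain ⟨c, rfl⟩ := hx
  obtain ⟨d, rfl⟩ := hy
  refine ⟨d * c⁻¹, by simp only [smul_smul, inv_mul_cancel_right], fun g hg => ?_⟩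
  have hgc : (g * c) • a = d • a := by rw [mul_smul, hg]
  exact eq_mul_inv_of_mul_eq (h hgc)

lemma RP2.mk_smul (v : V3) (hv : v ≠ 0) {c : ℝ} (hc : c ≠ 0) :
    RP2.mk (c • v) (smul_ne_zero hc hv) = RP2.mk v hv :=
  RP2.mk_eq_mk_iff.2 ⟨c⁻¹, inv_ne_zero hc, by rw [smul_smul, inv_mul_cancel₀ hc, one_smul]⟩

lemma RP2.coord_ne_zero_of_mk_eq {v w : V3} {hv : v ≠ 0} {hw : w ≠ 0} (i : Fin 3)
    (h : RP2.mk v hv = RP2.mk w hw) (hvi : v i ≠ 0) : w i ≠ 0 := by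
  obtain ⟨c, hc, rfl⟩ := RP2.mk_eq_mk_iff.1 h
  exact mul_ne_zero hc hvi

lemma RP2.eq_of_mk_eq_of_coord_eq {v w : V3} {hv : v ≠ 0} {hw : w ≠ 0} (i : Fin 3)
    (h : RP2.mk v hv = RP2.mk w hw) (hi : v i = w i) (hvi : v i ≠ 0) : v = w := by
  obtain ⟨c, hc, rfl⟩ := RP2.mk_eq_mk_iff.1 h
  rw [(mul_eq_right₀ hvi).1 hi.symm, one_smul]

lemma RP2.mk_congr {v w : V3} (h : v = w) {hv : v ≠ 0} {hw : w ≠ 0} :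
    RP2.mk v hv = RP2.mk w hw := by
  subst h
  rfl

instance : MulAction GL3 Flag3 where
  smul := flagMap
  one_smul := flagMap_one
  mul_smul g h x := (flagMap_flagMap g h x).symm

def jHom : SL2 →* GL3 where
  toFun := jGL
  map_one' := Units.ext jmat_one
  map_mul' B C := Units.ext (jmat_mul B C).symm

instance : MulAction SL2 Flag3 := MulAction.compHom Flag3 jHom

def affinePt (a c : ℝ) : V3 := ![a, c, 1]

def affineForm (d b : ℝ) : V3 := ![d, -b, -1]

lemma affinePt_ne_zero (a c : ℝ) : affinePt a c ≠ 0 := ne_zero_of_coord 2 (by simp [affinePt])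

lemma affineForm_ne_zero (d b : ℝ) : affineForm d b ≠ 0 :=
  ne_zero_of_coord 2 (by simp [affineForm])

lemma affineForm_dotProduct_affinePt (a b c d : ℝ) :
    affineForm d b ⬝ᵥ affinePt a c = a * d - b * c - 1 := by
  simp [affineForm, affinePt, dotProduct, Fin.sum_univ_three]
  ring

def flagOfSL2 (B : SL2) : Flag3 :=
  ⟨(RP2.mk (affinePt (B 0 0) (B 1 0)) (affinePt_ne_zero _ _),
    RP2.mk (affineForm (B 1 1) (B 0 1)) (affineForm_ne_zero _ _)),
   mem_flagSpace_mk _ _ (by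
     rw [affineForm_dotProduct_affinePt, ← Matrix.det_fin_two, B.det_coe, sub_self])⟩

lemma jmat_mulVec_oPoint (B : SL2) :
    jmat B *ᵥ ![1, 0, 1] = affinePt (B 0 0) (B 1 0) := by
  ext i
  fin_cases i <;> simp [affinePt, jmat, Matrix.mulVec, dotProduct, Fin.sum_univ_three]

lemma dualGL_jGL_mulVec_oForm (B : SL2) :
    ((dualGL (jGL B) : GL3) : Matrix (Fin 3) (Fin 3) ℝ) *ᵥ ![1, 0, -1] =
      affineForm (B 1 1) (B 0 1) := by
  change (jmat ((B⁻¹ : SL2) : Matrix (Fin 2) (Fin 2) ℝ))ᵀ *ᵥ _ = _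
  rw [Matrix.SpecialLinearGroup.coe_inv, Matrix.adjugate_fin_two]
  ext i
  fin_cases i <;> simp [affineForm, jmat, Matrix.mulVec, dotProduct, Fin.sum_univ_three]

lemma smul_oFlag (B : SL2) : B • oFlag = flagOfSL2 B :=
  Subtype.ext <| Prod.ext
    (RP2.mk_congr (jmat_mulVec_oPoint B)) (RP2.mk_congr (dualGL_jGL_mulVec_oForm B))

lemma flagOfSL2_injective : Function.Injective flagOfSL2 := by
  intro B C h
  have hpt := RP2.eq_of_mk_eq_of_coord_eq 2 (congrArg (fun x : Flag3 => x.1.1) h) rfl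
    (by simp [affinePt])
  have hform := RP2.eq_of_mk_eq_of_coord_eq 2 (congrArg (fun x : Flag3 => x.1.2) h) rfl
    (by simp [affineForm])
  simp only [affinePt, affineForm, Matrix.vecCons_inj, neg_inj, and_true] at hpt hform
  ext i j
  fin_cases i <;> fin_cases j
  exacts [hpt.1, hform.2, hpt.2, hform.1]

lemma flagOfSL2_mem_Yset (B : SL2) : flagOfSL2 B ∈ Yset :=
  ⟨fun _ _ h => RP2.coord_ne_zero_of_mk_eq (v := affinePt _ _) 2 h (by simp [affinePt]),
   fun _ _ h => RP2.coord_ne_zero_of_mk_eq (v := affineForm _ _) 2 h (by simp [affineForm])⟩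

lemma exists_flagOfSL2_eq_of_mem_Yset {x : Flag3} (hx : x ∈ Yset) : ∃ B, flagOfSL2 B = x := by
  obtain ⟨⟨p, q⟩, hflag⟩ := x
  induction p using RP2.ind with | h v hv => ?_
  induction q using RP2.ind with | h f hf => ?_
  have hv2 : v 2 ≠ 0 := hx.1 v hv rfl
  have hf2 : f 2 ≠ 0 := hx.2 f hf rfl
  have hdot : f 0 * v 0 + f 1 * v 1 + f 2 * v 2 = 0 := by
    simpa [dotProduct, Fin.sum_univ_three] using hflag v f hv hf rfl rfl
  have hdet : (!![v 0 / v 2, f 1 / f 2; v 1 / v 2, -(f 0 / f 2)]).det = 1 := by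
    rw [Matrix.det_fin_two_of]
    field_simp
    linear_combination -hdot
  refine ⟨⟨_, hdet⟩, Subtype.ext (Prod.ext ?_ ?_)⟩
  · refine (RP2.mk_congr ?_).trans (RP2.mk_smul v hv (inv_ne_zero hv2))
    ext i
    fin_cases i <;> simp [affinePt] <;> field_simp
  · refine (RP2.mk_congr ?_).trans (RP2.mk_smul f hf (neg_ne_zero.2 (inv_ne_zero hf2)))
    ext i
    fin_cases i <;> simp [affineForm] <;> field_simp

lemma range_flagOfSL2 : Set.range flagOfSL2 = Yset :=
  Set.Subset.antisymm (Set.range_subset_iff.2 flagOfSL2_mem_Yset)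
    fun _ hx => exists_flagOfSL2_eq_of_mem_Yset hx

/-- Lemma 4.2(1): `A ↦ j(A)·o'` is a bijection from `SL(2,ℝ)` onto `Y`; in
particular `Y` is `j(SL(2,ℝ))`-invariant and `j(SL(2,ℝ))` acts simply transitively
on `Y`. -/
theorem sl2_simply_transitive_on_open_orbit :
    Function.Injective (fun B : SL2 => flagMap (jGL B) oFlag) ∧
    Set.range (fun B : SL2 => flagMap (jGL B) oFlag) = Yset ∧
    (∀ (B : SL2), ∀ x ∈ Yset, flagMap (jGL B) x ∈ Yset) ∧
    (∀ x ∈ Yset, ∀ y ∈ Yset, ∃! B : SL2, flagMap (jGL B) x = y) := by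
  have horbit : (fun B : SL2 => flagMap (jGL B) oFlag) = flagOfSL2 := funext smul_oFlag
  have hinj : Function.Injective (· • oFlag : SL2 → Flag3) := horbit ▸ flagOfSL2_injective
  have hY : MulAction.orbit SL2 oFlag = Yset := (congrArg Set.range horbit).trans range_flagOfSL2
  rw [horbit]
  refine ⟨flagOfSL2_injective, range_flagOfSL2, ?_, ?_⟩
  · intro B x hx
    rw [← hY] at hx ⊢
    exact MulAction.mem_orbit_of_mem_orbit B hx
  · intro x hx y hy
    rw [← hY] at hx hy
    exact MulAction.existsUnique_smul_eq_of_injective hinj hx hy
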